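/- Define δ'_⊘(z) = f_max ⊘ |z|⁻⁻ if 1+2^{1−p} < |z| ≤ f_max, and δ'_⊘(z) = f_max otherwise. Then δ'_⊘(z) is a correct upper bound for the second operand of division: for every nonzero float z (z ≠ ±0, −∞) and all floats x, y, if x ⊘ y = z then y ≤ δ'_⊘(z). Moreover, for 1+2^{1−p} < |z| ≤ f_max the inequality is strict for the supremum: the maximal y with ∃x, x ⊘ y = z is strictly less than δ'_⊘(z). -/

import Mathlib

open scoped Classical

/-- Finite binary floating-point numbers with precision `p` and exponent range
`[emin, emax]` (subnormals included), viewed as real numbers. -/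
def FF (p : ℕ) (emin emax : ℤ) : Set ℝ :=
  {x | ∃ m e : ℤ, |m| < 2 ^ p ∧ emin ≤ e ∧ e ≤ emax ∧
        x = (m : ℝ) * (2 : ℝ) ^ (e + 1 - (p : ℤ))}

/-- Binary floating-point numbers with precision `p` and unbounded exponent. -/
def FInf (p : ℕ) : Set ℝ :=
  {x | ∃ m e : ℤ, |m| < 2 ^ p ∧ x = (m : ℝ) * (2 : ℝ) ^ e}

/-- `z` has an even least-significant significand bit (canonical representation),
format with bounded exponents. -/
def evenFF (p : ℕ) (emin emax : ℤ) (z : ℝ) : Prop :=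
  ∃ m e : ℤ, |m| < 2 ^ p ∧ emin ≤ e ∧ e ≤ emax ∧
    z = (m : ℝ) * (2 : ℝ) ^ (e + 1 - (p : ℤ)) ∧ 2 ∣ m ∧
    ((2 : ℤ) ^ (p - 1) ≤ |m| ∨ e = emin)

/-- `z` has an odd least-significant significand bit (canonical representation). -/
def oddFF (p : ℕ) (emin emax : ℤ) (z : ℝ) : Prop :=
  ∃ m e : ℤ, |m| < 2 ^ p ∧ emin ≤ e ∧ e ≤ emax ∧
    z = (m : ℝ) * (2 : ℝ) ^ (e + 1 - (p : ℤ)) ∧ ¬ 2 ∣ m ∧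
    ((2 : ℤ) ^ (p - 1) ≤ |m| ∨ e = emin)

/-- Evenness of the significand for the unbounded-exponent format. -/
def evenInf (p : ℕ) (z : ℝ) : Prop :=
  ∃ m e : ℤ, z = (m : ℝ) * (2 : ℝ) ^ e ∧ 2 ∣ m ∧
    (((2 : ℤ) ^ (p - 1) ≤ |m| ∧ |m| < 2 ^ p) ∨ m = 0)

/-- `rnd` is round-to-nearest with ties-to-even onto the set `F` of representable
numbers, `even` being the evenness predicate used to break ties. -/
def IsRNE (F : Set ℝ) (even : ℝ → Prop) (rnd : ℝ → ℝ) : Prop :=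
  ∀ x : ℝ, rnd x ∈ F ∧ (∀ y ∈ F, |x - rnd x| ≤ |x - y|) ∧
    (∀ y ∈ F, y ≠ rnd x → |x - rnd x| = |x - y| → even (rnd x))

/-- The successor of `x` in the set `F`. -/
noncomputable def succF (F : Set ℝ) (x : ℝ) : ℝ := sInf {y | y ∈ F ∧ x < y}

/-- The predecessor of `x` in the set `F`. -/
noncomputable def predF (F : Set ℝ) (x : ℝ) : ℝ := sSup {y | y ∈ F ∧ y < x}

/-- The largest finite float, `f_max = (2 - 2^(1-p)) * 2^emax`. -/
noncomputable def fmax (p : ℕ) (emax : ℤ) : ℝ :=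
  (2 - (2 : ℝ) ^ (1 - (p : ℤ))) * (2 : ℝ) ^ emax

/-- The smallest positive (subnormal) float, `f_min = 2^(emin+1-p)`. -/
noncomputable def fminF (p : ℕ) (emin : ℤ) : ℝ := (2 : ℝ) ^ (emin + 1 - (p : ℤ))

/-- The bound `δ'_⊘` for the second operand of division. -/
noncomputable def deltaDiv (p : ℕ) (emin emax : ℤ) (rnd : ℝ → ℝ) (z : ℝ) : ℝ :=
  if 1 + (2 : ℝ) ^ (1 - (p : ℤ)) < |z| ∧ |z| ≤ fmax p emax then
    rnd (fmax p emax / predF (FF p emin emax) (predF (FF p emin emax) |z|))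
  else fmax p emax

/-!
Write `v = |z|⁻` and `w = v⁻`. If `x ⊘ y = z` with `|z| > 1 + 2^(1-p)`, then `|x / y| > v`, so
`y < f_max / v`. Two neighbouring floats `w < v` differ by more than `2^(-p) w`, hence
`f_max / w > (1 + 2^(-p)) f_max / v`; this margin exceeds half the gap between `y` and its
successor `s`, so `f_max / w` lies past the midpoint of `y` and `s` and rounds to a float above `y`.
Outside that range `δ'_⊘(z) = f_max` bounds every float.
-/

section Rounding

variable {F : Set ℝ} {even : ℝ → Prop} {rnd : ℝ → ℝ}

theorem IsRNE.lt_of_lt_rnd (h : IsRNE F even rnd) {c t : ℝ} (hc : c ∈ F) (hct : c < rnd t) :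
    c < t := by
  by_contra! htc
  have := (h t).2.1 c hc
  rw [abs_of_nonpos (by linarith), abs_of_nonpos (by linarith)] at this
  linarith

theorem IsRNE.lt_of_rnd_lt (h : IsRNE F even rnd) {c t : ℝ} (hc : c ∈ F) (htc : rnd t < c) :
    t < c := by
  by_contra! hct
  have := (h t).2.1 c hc
  rw [abs_of_nonneg (by linarith), abs_of_nonneg (by linarith)] at this
  linarith

theorem IsRNE.lt_abs_of_lt_abs_rnd (h : IsRNE F even rnd) (hneg : ∀ a ∈ F, -a ∈ F)
    {c t : ℝ} (hc : c ∈ F) (hct : c < |rnd t|) : c < |t| := by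
  rcases le_or_gt 0 (rnd t) with hr | hr
  · rw [abs_of_nonneg hr] at hct
    exact (h.lt_of_lt_rnd hc hct).trans_le (le_abs_self t)
  · rw [abs_of_neg hr] at hct
    have := h.lt_of_rnd_lt (hneg c hc) (by linarith : rnd t < -c)
    exact (lt_neg.mp this).trans_le (neg_le_abs t)

theorem IsRNE.lt_rnd_of_add_lt_two_mul (h : IsRNE F even rnd) {y s t : ℝ} (hs : s ∈ F)
    (hys : y < s) (hyst : y + s < 2 * t) : y < rnd t := by
  by_contra! hle
  have hnear := (h t).2.1 s hs
  have hts : |t - s| < t - y := abs_sub_lt_iff.mpr ⟨by linarith, by linarith⟩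
  have := le_abs_self (t - rnd t)
  linarith

end Rounding

theorem predF_mem_lt_ge {F : Set ℝ} (hF : F.Finite) {a x : ℝ} (ha : a ∈ F) (hax : a < x) :
    predF F x ∈ F ∧ predF F x < x ∧ a ≤ predF F x := by
  have hfin : {y | y ∈ F ∧ y < x}.Finite := hF.subset fun _ hy => hy.1
  have hne : {y | y ∈ F ∧ y < x}.Nonempty := ⟨a, ha, hax⟩
  obtain ⟨hmem, hlt⟩ := hne.csSup_mem hfin
  exact ⟨hmem, hlt, le_csSup hfin.bddAbove ⟨ha, hax⟩⟩

theorem exists_exponent_bracket (emin : ℤ) {f : ℝ} (hf : 0 < f) :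
    ∃ k : ℤ, emin ≤ k ∧ f < 2 ^ (k + 1) ∧ (k = emin ∨ (2 : ℝ) ^ k ≤ f) := by
  have hlog := Int.zpow_log_le_self (R := ℝ) (b := 2) one_lt_two hf
  have hsucc := Int.lt_zpow_succ_log_self (R := ℝ) (b := 2) one_lt_two f
  push_cast at hlog hsucc
  refine ⟨max emin (Int.log 2 f), le_max_left _ _,
    hsucc.trans_le (zpow_le_zpow_right₀ one_le_two (by omega)), ?_⟩
  rcases max_cases emin (Int.log 2 f) with ⟨h, -⟩ | ⟨h, -⟩ <;> rw [h]
  · exact .inl rfl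
  · exact .inr hlog

section FloatFormat

variable {p : ℕ} {emin emax : ℤ}

theorem abs_int_mul_two_zpow_lt {m : ℤ} (hm : |m| < 2 ^ p) (e : ℤ) :
    |(m : ℝ) * 2 ^ (e + 1 - (p : ℤ))| < 2 ^ (e + 1) := by
  have hm' : |(m : ℝ)| < 2 ^ (p : ℤ) := by rw [zpow_natCast]; exact_mod_cast hm
  rw [abs_mul, abs_of_pos (a := (2 : ℝ) ^ (e + 1 - (p : ℤ))) (zpow_pos two_pos _)]
  calc |(m : ℝ)| * 2 ^ (e + 1 - (p : ℤ)) < 2 ^ (p : ℤ) * 2 ^ (e + 1 - (p : ℤ)) := by gcongr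
    _ = 2 ^ (e + 1) := by rw [← zpow_add₀ two_ne_zero]; ring_nf

theorem FF.neg_mem {f : ℝ} (hf : f ∈ FF p emin emax) : -f ∈ FF p emin emax := by
  obtain ⟨m, e, hm, h1, h2, rfl⟩ := hf
  exact ⟨-m, e, by rwa [abs_neg], h1, h2, by push_cast; ring⟩

theorem FF.finite : (FF p emin emax).Finite := by
  refine (((Set.finite_Ioo (-(2 ^ p : ℤ)) (2 ^ p)).prod (Set.finite_Icc emin emax)).image
    fun q : ℤ × ℤ => (q.1 : ℝ) * 2 ^ (q.2 + 1 - (p : ℤ))).subset ?_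
  rintro x ⟨m, e, hm, h1, h2, rfl⟩
  exact ⟨(m, e), ⟨abs_lt.mp hm, h1, h2⟩, rfl⟩

theorem FF.two_zpow_mem (hp : 1 ≤ p) {k : ℤ} (h1 : emin ≤ k) (h2 : k ≤ emax) :
    (2 : ℝ) ^ k ∈ FF p emin emax := by
  refine ⟨2 ^ (p - 1), k, ?_, h1, h2, ?_⟩
  · rw [abs_of_pos (by positivity)]
    exact pow_lt_pow_right₀ one_lt_two (by omega)
  · push_cast
    rw [← zpow_natCast, ← zpow_add₀ two_ne_zero]
    congr 1
    omega

theorem FF.one_add_mem (hp : 2 ≤ p) (hemin : emin ≤ 0) (hemax : 0 ≤ emax) :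
    1 + (2 : ℝ) ^ (1 - (p : ℤ)) ∈ FF p emin emax := by
  refine ⟨2 ^ (p - 1) + 1, 0, ?_, hemin, hemax, ?_⟩
  · have hpow : (2 : ℤ) ^ p = 2 * 2 ^ (p - 1) := by rw [← pow_succ']; congr 1; omega
    have : (2 : ℤ) ≤ 2 ^ (p - 1) := le_self_pow₀ one_le_two (by omega)
    rw [abs_of_pos (by positivity)]
    linarith
  · push_cast
    rw [add_mul, one_mul, ← zpow_natCast, ← zpow_add₀ two_ne_zero,
      show ((p - 1 : ℕ) : ℤ) + (1 - p) = 0 by omega, zpow_zero]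

theorem fmax_eq :
    fmax p emax = ((2 ^ p - 1 : ℤ) : ℝ) * 2 ^ (emax + 1 - (p : ℤ)) := by
  have h1 : (2 : ℝ) ^ (emax + 1 - (p : ℤ)) = 2 ^ (1 - (p : ℤ)) * 2 ^ emax := by
    rw [← zpow_add₀ two_ne_zero]; ring_nf
  have h2 : (2 : ℝ) ^ p * 2 ^ (1 - (p : ℤ)) = 2 := by
    rw [← zpow_natCast, ← zpow_add₀ two_ne_zero]; norm_num
  rw [fmax, h1]
  push_cast
  linear_combination (-(2 : ℝ) ^ emax) * h2

theorem fmax_lt_two_zpow : fmax p emax < 2 ^ (emax + 1) := by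
  have hpos : (0 : ℤ) ≤ 2 ^ p - 1 := by linarith [one_le_pow₀ (M₀ := ℤ) (n := p) one_le_two]
  rw [fmax_eq]
  exact (le_abs_self _).trans_lt
    (abs_int_mul_two_zpow_lt (by rw [abs_of_nonneg hpos]; linarith) emax)

theorem FF.le_fmax {f : ℝ} (hf : f ∈ FF p emin emax) : f ≤ fmax p emax := by
  obtain ⟨m, e, hm, -, he, rfl⟩ := hf
  rw [fmax_eq]
  have hm' : (m : ℝ) ≤ ((2 ^ p - 1 : ℤ) : ℝ) := by
    exact_mod_cast Int.le_sub_one_of_lt (abs_lt.mp hm).2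
  exact mul_le_mul hm' (zpow_le_zpow_right₀ one_le_two (by omega)) (zpow_pos two_pos _).le
    (by exact_mod_cast (abs_nonneg m).trans (Int.le_sub_one_of_lt hm))

theorem FF.exists_eq_int_mul {f : ℝ} (hf : f ∈ FF p emin emax) {k : ℤ}
    (hk : k ≤ emin ∨ (2 : ℝ) ^ k ≤ |f|) : ∃ n : ℤ, f = n * 2 ^ (k + 1 - (p : ℤ)) := by
  obtain ⟨m, e, hm, he, -, rfl⟩ := hf
  have hke : k ≤ e := by
    rcases hk with hk | hk
    · omega
    · have := hk.trans_lt (abs_int_mul_two_zpow_lt hm e)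
      have := (zpow_lt_zpow_iff_right₀ one_lt_two).mp this
      omega
  refine ⟨m * 2 ^ (e - k).toNat, ?_⟩
  push_cast
  rw [← zpow_natCast, Int.toNat_of_nonneg (by omega), mul_assoc, ← zpow_add₀ two_ne_zero]
  ring_nf

/-- Both floats lie on the grid of spacing `2 ^ (k + 1 - p)`, where `2 ^ k ≤ f < 2 ^ (k + 1)`
(or `k = emin`). -/
theorem FF.mul_one_add_lt {f v : ℝ} (hf : f ∈ FF p emin emax) (hv : v ∈ FF p emin emax)
    (hf0 : 0 < f) (hfv : f < v) : f * (1 + 2 ^ (-(p : ℤ))) < v := by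
  obtain ⟨k, -, hfk, hk⟩ := exists_exponent_bracket emin hf0
  have hgrid : ∀ g : ℝ, f ≤ g → k ≤ emin ∨ (2 : ℝ) ^ k ≤ |g| := fun g hg =>
    hk.imp le_of_eq fun h => h.trans (hg.trans (le_abs_self g))
  obtain ⟨n, hn⟩ := FF.exists_eq_int_mul hf (hgrid f le_rfl)
  obtain ⟨N, hN⟩ := FF.exists_eq_int_mul hv (hgrid v hfv.le)
  set u : ℝ := 2 ^ (k + 1 - (p : ℤ))
  have hu : 0 < u := zpow_pos two_pos _
  have hnN : (n : ℝ) + 1 ≤ N := by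
    have : (n : ℝ) < N := lt_of_mul_lt_mul_right (hn ▸ hN ▸ hfv) hu.le
    exact_mod_cast Int.add_one_le_of_lt (by exact_mod_cast this)
  have hfu : f * 2 ^ (-(p : ℤ)) < u := by
    calc f * 2 ^ (-(p : ℤ)) < 2 ^ (k + 1) * 2 ^ (-(p : ℤ)) := by gcongr
      _ = u := by rw [← zpow_add₀ two_ne_zero, ← sub_eq_add_neg]
  calc f * (1 + 2 ^ (-(p : ℤ))) < f + u := by linarith
    _ = (n + 1) * u := by rw [hn]; ring
    _ ≤ v := by rw [hN]; gcongr

theorem FF.exists_gt_le_add (hp : 1 ≤ p) {y : ℝ} (hy : y ∈ FF p emin emax) (hy0 : 0 < y)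
    (hyf : y < fmax p emax) :
    ∃ s ∈ FF p emin emax, y < s ∧ s ≤ y + 2 ^ (1 - (p : ℤ)) * max y (2 ^ emin) := by
  obtain ⟨k, hk1, hyk, hk⟩ := exists_exponent_bracket emin hy0
  obtain ⟨n, hn⟩ := FF.exists_eq_int_mul hy (hk.imp le_of_eq fun h => h.trans (le_abs_self y))
  set u : ℝ := 2 ^ (k + 1 - (p : ℤ))
  have hu : 0 < u := zpow_pos two_pos _
  have hgap : u ≤ 2 ^ (1 - (p : ℤ)) * max y (2 ^ emin) := by
    rw [show u = 2 ^ (1 - (p : ℤ)) * 2 ^ k by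
      simp only [u]; rw [← zpow_add₀ two_ne_zero]; ring_nf]
    gcongr
    rcases hk with rfl | hk
    · exact le_max_right _ _
    · exact hk.trans (le_max_left _ _)
  refine ⟨y + u, ?_, by linarith, by linarith⟩
  have hkemax : k ≤ emax := by
    rcases hk with rfl | hk
    · obtain ⟨m, e, -, h1, h2, -⟩ := hy
      omega
    · have := hk.trans_lt (hyf.trans fmax_lt_two_zpow)
      have := (zpow_lt_zpow_iff_right₀ one_lt_two).mp this
      omega
  have hn0 : 0 < n := by
    have : (0 : ℝ) < n := pos_of_mul_pos_left (hn ▸ hy0) hu.le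
    exact_mod_cast this
  have hnp : n < 2 ^ p := by
    have : (n : ℝ) < 2 ^ p := by
      refine lt_of_mul_lt_mul_right ?_ hu.le
      rw [← hn, ← zpow_natCast, ← zpow_add₀ two_ne_zero]
      ring_nf at hyk ⊢
      exact hyk
    exact_mod_cast this
  rcases (Int.add_one_le_of_lt hnp).lt_or_eq with hlt | heq
  · exact ⟨n + 1, k, abs_lt.mpr ⟨by linarith [pow_pos (two_pos (α := ℤ)) p], hlt⟩, hk1, hkemax,
      by rw [hn]; push_cast; ring⟩
  · have hkemax' : k < emax := by
      refine hkemax.lt_of_ne fun hke => hyf.ne ?_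
      rw [hn, fmax_eq, ← hke, ← heq]
      push_cast
      ring
    have : y + u = 2 ^ (k + 1) := by
      have hn' : (n : ℝ) = 2 ^ p - 1 := by exact_mod_cast eq_sub_of_add_eq heq
      rw [hn, hn', ← zpow_natCast, sub_mul, one_mul, ← zpow_add₀ two_ne_zero]
      ring_nf
    rw [this]
    exact FF.two_zpow_mem hp (by omega) (by omega)

end FloatFormat

theorem lt_fmax_div_of_rnd_div_eq {p : ℕ} {emin emax : ℤ} {rnd : ℝ → ℝ}
    (hrnd : IsRNE (FF p emin emax) (evenFF p emin emax) rnd) {v x y : ℝ}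
    (hvF : v ∈ FF p emin emax) (hv0 : 0 < v) (hvz : v < |rnd (x / y)|)
    (hx : x ∈ FF p emin emax) (hy0 : 0 < y) : y < fmax p emax / v := by
  have hq : v < |x| / y := by
    rw [← abs_of_pos hy0, ← abs_div]
    exact hrnd.lt_abs_of_lt_abs_rnd (fun a ha => FF.neg_mem ha) hvF hvz
  have hxM : |x| ≤ fmax p emax :=
    abs_le.mpr ⟨by linarith [FF.le_fmax (FF.neg_mem hx)], FF.le_fmax hx⟩
  rw [lt_div_iff₀ hy0] at hq
  rw [lt_div_iff₀ hv0]
  linarith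

theorem lt_deltaDiv {p : ℕ} {emin emax : ℤ} (hp : 2 ≤ p) (hemin : emin ≤ 0) (hemax : 0 ≤ emax)
    {rnd : ℝ → ℝ} (hrnd : IsRNE (FF p emin emax) (evenFF p emin emax) rnd) {z : ℝ}
    (hz1 : 1 + (2 : ℝ) ^ (1 - (p : ℤ)) < |z|) (hz2 : |z| ≤ fmax p emax) {x y : ℝ}
    (hx : x ∈ FF p emin emax) (hy : y ∈ FF p emin emax) (hxy : rnd (x / y) = z) :
    y < deltaDiv p emin emax rnd z := by
  have h1F : (1 : ℝ) ∈ FF p emin emax := by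
    simpa using FF.two_zpow_mem (p := p) (by omega) hemin hemax
  have hε : (0 : ℝ) < 2 ^ (-(p : ℤ)) := zpow_pos two_pos _
  obtain ⟨hvF, hvz, hv1⟩ := predF_mem_lt_ge FF.finite (FF.one_add_mem hp hemin hemax) hz1
  set v := predF (FF p emin emax) |z|
  have hv1' : 1 < v := by linarith [zpow_pos (two_pos (α := ℝ)) (1 - (p : ℤ))]
  obtain ⟨hwF, hwv, hw1⟩ := predF_mem_lt_ge FF.finite h1F hv1'
  set w := predF (FF p emin emax) v
  rw [deltaDiv, if_pos ⟨hz1, hz2⟩]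
  set M := fmax p emax
  have hv0 : 0 < v := by linarith
  have hw0 : 0 < w := by linarith
  have hMv : 1 < M / v := (one_lt_div hv0).mpr (hvz.trans_le hz2)
  have hMw : M / v * (1 + 2 ^ (-(p : ℤ))) < M / w := by
    have hwv' := FF.mul_one_add_lt hwF hvF hw0 hwv
    rw [div_mul_eq_mul_div, div_lt_div_iff₀ hv0 hw0]
    nlinarith
  obtain ⟨s, hsF, hys, hsy⟩ : ∃ s ∈ FF p emin emax, y < s ∧ y + s < 2 * (M / w) := by
    rcases le_or_gt y 0 with hy0 | hy0
    · exact ⟨1, h1F, by linarith, by nlinarith⟩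
    have hyMv : y < M / v := lt_fmax_div_of_rnd_div_eq hrnd hvF hv0 (hxy ▸ hvz) hx hy0
    obtain ⟨s, hsF, hys, hsle⟩ := FF.exists_gt_le_add (by omega) hy hy0
      (hyMv.trans_le (div_le_self ((abs_nonneg z).trans hz2) hv1'.le))
    have hmax : max y (2 ^ emin) < M / v :=
      max_lt hyMv ((zpow_le_one_of_nonpos₀ one_le_two hemin).trans_lt hMv)
    have h2ε : (2 : ℝ) ^ (1 - (p : ℤ)) = 2 * 2 ^ (-(p : ℤ)) := by
      rw [sub_eq_add_neg, zpow_add₀ two_ne_zero, zpow_one]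
    refine ⟨s, hsF, hys, ?_⟩
    rw [h2ε] at hsle
    nlinarith
  exact hrnd.lt_rnd_of_add_lt_two_mul hsF hys hsy

/-- `δ'_⊘(z)` is a correct upper bound for the second operand of division:
`x ⊘ y = z` implies `y ≤ δ'_⊘(z)`, and for `1 + 2^(1-p) < |z| ≤ f_max` every
feasible `y` is strictly below `δ'_⊘(z)`. -/
theorem deltaDiv_correct (p : ℕ) (hp : 2 ≤ p) (emin emax : ℤ)
    (hemin : emin ≤ 0) (hemax : 1 ≤ emax)
    (rnd : ℝ → ℝ)
    (hrnd : IsRNE (FF p emin emax) (evenFF p emin emax) rnd) :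
    (∀ z ∈ FF p emin emax, z ≠ 0 →
      ∀ x ∈ FF p emin emax, ∀ y ∈ FF p emin emax,
        rnd (x / y) = z → y ≤ deltaDiv p emin emax rnd z) ∧
    (∀ z ∈ FF p emin emax,
      1 + (2 : ℝ) ^ (1 - (p : ℤ)) < |z| → |z| ≤ fmax p emax →
      ∀ y ∈ FF p emin emax, (∃ x ∈ FF p emin emax, rnd (x / y) = z) →
        y < deltaDiv p emin emax rnd z) := by
  refine ⟨fun z _ _ x hx y hy hxy => ?_, fun z _ hz1 hz2 y hy ⟨x, hx, hxy⟩ =>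
    lt_deltaDiv hp hemin (by omega) hrnd hz1 hz2 hx hy hxy⟩
  by_cases hz : 1 + (2 : ℝ) ^ (1 - (p : ℤ)) < |z| ∧ |z| ≤ fmax p emax
  · exact (lt_deltaDiv hp hemin (by omega) hrnd hz.1 hz.2 hx hy hxy).le
  · rw [deltaDiv, if_neg hz]
    exact FF.le_fmax hy
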